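/- Let R be a commutative ring, σ a type, m ≥ 2 and d natural numbers, and let A be a 2m×2m matrix over MvPolynomial σ R such that every entry of A has total degree at most d. Let Δ := det(A11) • A22 − A21 · adj(A11) · A12. Then there exists an m×m matrix Q over MvPolynomial σ R such that adj(Δ) = det(A11)^(m−2) • Q and every entry of Q has total degree at most (2m−1)·d. -/

import Mathlib

/-!
If `A₁₁` and `A` are invertible, then `Δ = det A₁₁ • S` for the Schur complement
`S = A₂₂ - A₂₁ A₁₁⁻¹ A₁₂`, the block inversion formula gives `(A⁻¹)₂₂ = S⁻¹`, and
`det A = det A₁₁ * det S`; together these give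
`adj Δ = det A₁₁ ^ (m - 1) • adj S = det A₁₁ ^ (m - 2) • (adj A)₂₂`.
Both sides are polynomial in the entries of `A`, so it suffices to prove this for the generic
matrix, whose two determinants are nonzero and hence units in the fraction field.
So `Q = (adj A)₂₂` works; its entries are `(2m - 1)`-minors of `A`, of total degree at most
`(2m - 1) d`.
-/

open MvPolynomial

namespace Matrix

section Map

variable {l m n o α β : Type*}

theorem map_toBlocks₁₁ (f : α → β) (M : Matrix (n ⊕ o) (l ⊕ m) α) :
    M.toBlocks₁₁.map f = (M.map f).toBlocks₁₁ :=
  rfl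

theorem map_toBlocks₂₂ (f : α → β) (M : Matrix (n ⊕ o) (l ⊕ m) α) :
    M.toBlocks₂₂.map f = (M.map f).toBlocks₂₂ :=
  rfl

end Map

variable {n o α β : Type*} [Fintype n] [DecidableEq n] [CommRing α] [CommRing β]

theorem map_adjugate (f : α →+* β) (A : Matrix n n α) : A.adjugate.map f = (A.map f).adjugate :=
  f.map_adjugate A

theorem adjugate_eq_det_smul_invOf (A : Matrix n n α) [Invertible A] :
    A.adjugate = A.det • ⅟A := by
  rw [← invOf_mul_cancel_left A A.adjugate, mul_adjugate, Matrix.mul_smul, Matrix.mul_one]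

theorem totalDegree_det_le {σ : Type*} (M : Matrix n n (MvPolynomial σ α)) (e : n → ℕ)
    (h : ∀ i j, (M i j).totalDegree ≤ e i) : M.det.totalDegree ≤ ∑ i, e i := by
  rw [det_apply]
  refine (totalDegree_finsetSum _ _).trans (Finset.sup_le fun π _ => ?_)
  refine (totalDegree_smul_le _ _).trans ((totalDegree_finsetProd _ _).trans ?_)
  calc ∑ k, (M (π k) k).totalDegree ≤ ∑ k, e (π k) := Finset.sum_le_sum fun k _ => h _ _
    _ = ∑ i, e i := Equiv.sum_comp π e

theorem totalDegree_adjugate_le {σ : Type*} (M : Matrix n n (MvPolynomial σ α)) {d : ℕ}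
    (h : ∀ i j, (M i j).totalDegree ≤ d) (i j : n) :
    (M.adjugate i j).totalDegree ≤ (Fintype.card n - 1) * d := by
  rw [adjugate_apply]
  refine (totalDegree_det_le _ (fun k => if k = j then 0 else d) fun k l => ?_).trans ?_
  · rcases eq_or_ne k j with rfl | hk
    · simp [Pi.single_apply, apply_ite totalDegree]
    · simpa [hk] using h k l
  · simp [Finset.sum_ite, Finset.filter_ne']

def ffSchur (M : Matrix (n ⊕ o) (n ⊕ o) α) : Matrix o o α :=
  M.toBlocks₁₁.det • M.toBlocks₂₂ - M.toBlocks₂₁ * M.toBlocks₁₁.adjugate * M.toBlocks₁₂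

theorem map_ffSchur (f : α →+* β) (M : Matrix (n ⊕ o) (n ⊕ o) α) :
    (ffSchur M).map f = ffSchur (M.map f) := by
  rw [ffSchur, Matrix.map_sub _ (map_sub f), Matrix.map_mul, Matrix.map_mul,
    Matrix.map_smul' _ _ _ (map_mul f), RingHom.map_det, map_adjugate]
  rfl

variable [Fintype o] [DecidableEq o]

theorem adjugate_ffSchur_of_isUnit (M : Matrix (n ⊕ o) (n ⊕ o) α)
    (h₁₁ : IsUnit M.toBlocks₁₁.det) (h : IsUnit M.det) (ho : 2 ≤ Fintype.card o) :
    (ffSchur M).adjugate = M.toBlocks₁₁.det ^ (Fintype.card o - 2) • M.adjugate.toBlocks₂₂ := by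
  obtain ⟨A, B, C, D, rfl⟩ : ∃ A B C D, M = fromBlocks A B C D :=
    ⟨_, _, _, _, (fromBlocks_toBlocks M).symm⟩
  rw [toBlocks_fromBlocks₁₁] at h₁₁ ⊢
  let := invertibleOfIsUnitDet A h₁₁
  set S := D - C * ⅟A * B
  have hdet : (fromBlocks A B C D).det = A.det * S.det := det_fromBlocks₁₁ A B C D
  let := invertibleOfIsUnitDet S (isUnit_of_mul_isUnit_right (hdet ▸ h))
  let := invertibleOfIsUnitDet _ h
  have hΔ : ffSchur (fromBlocks A B C D) = A.det • S := by
    simp only [ffSchur, toBlocks_fromBlocks₁₁, toBlocks_fromBlocks₁₂, toBlocks_fromBlocks₂₁,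
      toBlocks_fromBlocks₂₂, adjugate_eq_det_smul_invOf A, S, smul_sub, Matrix.mul_smul,
      Matrix.smul_mul]
  have h₂₂ : (fromBlocks A B C D).adjugate.toBlocks₂₂ = A.det • S.adjugate := by
    rw [adjugate_eq_det_smul_invOf, invOf_fromBlocks₁₁_eq, adjugate_eq_det_smul_invOf S, hdet,
      ← smul_smul]
    rfl
  rw [hΔ, adjugate_smul, h₂₂, smul_smul, ← pow_succ]
  congr 2
  omega

theorem det_toBlocks₁₁_mvPolynomialX_ne_zero (R : Type*) [CommRing R] [Nontrivial R] :
    (mvPolynomialX (n ⊕ o) (n ⊕ o) R).toBlocks₁₁.det ≠ 0 := by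
  intro h
  have h1 := congrArg (fun A : Matrix (n ⊕ o) (n ⊕ o) R => A.toBlocks₁₁.det)
    (mvPolynomialX_mapMatrix_eval (1 : Matrix (n ⊕ o) (n ⊕ o) R))
  rw [RingHom.mapMatrix_apply, ← map_toBlocks₁₁, ← RingHom.mapMatrix_apply, ← RingHom.map_det, h,
    map_zero, ← fromBlocks_one, toBlocks_fromBlocks₁₁, det_one] at h1
  exact zero_ne_one h1

theorem adjugate_ffSchur (M : Matrix (n ⊕ o) (n ⊕ o) α) (ho : 2 ≤ Fintype.card o) :
    (ffSchur M).adjugate = M.toBlocks₁₁.det ^ (Fintype.card o - 2) • M.adjugate.toBlocks₂₂ := by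
  let X := mvPolynomialX (n ⊕ o) (n ⊕ o) ℤ
  suffices hX : (ffSchur X).adjugate =
      X.toBlocks₁₁.det ^ (Fintype.card o - 2) • X.adjugate.toBlocks₂₂ by
    let ψ := (aeval (R := ℤ) fun p : (n ⊕ o) × (n ⊕ o) => M p.1 p.2).toRingHom
    have hψ : X.map ψ = M := mvPolynomialX_mapMatrix_aeval ℤ M
    have := congrArg (Matrix.map · ψ) hX
    simpa only [map_adjugate, map_ffSchur, Matrix.map_smul' _ _ _ (map_mul ψ), map_pow,
      RingHom.map_det, RingHom.mapMatrix_apply, map_toBlocks₁₁, map_toBlocks₂₂, hψ] using this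
  let φ := algebraMap (MvPolynomial ((n ⊕ o) × (n ⊕ o)) ℤ)
    (FractionRing (MvPolynomial ((n ⊕ o) × (n ⊕ o)) ℤ))
  have hφ : Function.Injective φ := IsFractionRing.injective _ _
  apply Matrix.map_injective hφ
  simp only [map_adjugate, map_ffSchur, Matrix.map_smul' _ _ _ (map_mul φ), map_pow,
    RingHom.map_det, RingHom.mapMatrix_apply, map_toBlocks₁₁, map_toBlocks₂₂]
  apply adjugate_ffSchur_of_isUnit _ _ _ ho
  · rw [isUnit_iff_ne_zero, ← map_toBlocks₁₁, ← RingHom.mapMatrix_apply, ← RingHom.map_det,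
      map_ne_zero_iff φ hφ]
    exact det_toBlocks₁₁_mvPolynomialX_ne_zero ℤ
  · rw [isUnit_iff_ne_zero, ← RingHom.mapMatrix_apply, ← RingHom.map_det, map_ne_zero_iff φ hφ]
    exact det_mvPolynomialX_ne_zero _ ℤ

end Matrix

/-- If every entry of a `2m × 2m` matrix (`m ≥ 2`) over a multivariate
polynomial ring, given by `m × m` blocks `A11, A12, A21, A22`, has total degree at most `d`,
and `Δ = det(A11) • A22 - A21 * adj(A11) * A12`, then there is an `m × m` matrix `Q` with
`adj(Δ) = det(A11) ^ (m - 2) • Q` and every entry of `Q` of total degree at most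
`(2m - 1) * d`. -/
theorem adjugate_ffSchur_factor {R : Type*} [CommRing R] {σ : Type*} (m d : ℕ) (hm : 2 ≤ m)
    (A11 A12 A21 A22 : Matrix (Fin m) (Fin m) (MvPolynomial σ R))
    (hA : ∀ i j, ((Matrix.fromBlocks A11 A12 A21 A22) i j).totalDegree ≤ d) :
    ∃ Q : Matrix (Fin m) (Fin m) (MvPolynomial σ R),
      (A11.det • A22 - A21 * A11.adjugate * A12).adjugate = A11.det ^ (m - 2) • Q ∧
        ∀ i j, (Q i j).totalDegree ≤ (2 * m - 1) * d := by
  let A := Matrix.fromBlocks A11 A12 A21 A22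
  refine ⟨A.adjugate.toBlocks₂₂, ?_, fun i j => ?_⟩
  · simpa [Matrix.ffSchur, A] using Matrix.adjugate_ffSchur A (by simpa using hm)
  · have h := Matrix.totalDegree_adjugate_le A hA (Sum.inr i) (Sum.inr j)
    rwa [Fintype.card_sum, Fintype.card_fin, ← two_mul] at h
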